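/- arXiv:math/9710212 — 4 statements merged into one kernel-verified Lean document; each statement's English description precedes it below -/
import Mathlib

section
/- If E is a closed subset of the circle ℝ/ℤ and the map m_d(t) = d·t (mod 1), for an integer d ≥ 2, maps E homeomorphically onto itself, then E is finite. -/
/-!
Near the diagonal `m_d` multiplies distances by exactly `d`. On the compact set `E` the inverse
of `e = m_d|E` is uniformly continuous, so there is a `δ > 0` such that whenever `eⁿ x` and `eⁿ y`
are `δ`-close, so are all the intermediate iterates, and hence `dⁿ * dist x y < δ`. Pulling back a cover
of `E` by `N` balls of radius `δ / 2` along `eⁿ` therefore covers `E` by `N` sets of diameter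
`< δ / dⁿ`; as `n → ∞` this forces `E` to have at most `N` points.
-/

open Set MeasureTheory Topology

noncomputable section

/-- The circle `ℝ/ℤ`. -/
abbrev 𝕊 : Type := AddCircle (1 : ℝ)

/-- Multiplication by `d` modulo `1` on the circle `ℝ/ℤ`. -/
def md (d : ℕ) (t : 𝕊) : 𝕊 := d • t

/-- `A` is unlinked with `B`: `A` is contained in a single connected component of the
complement of `B` in the circle. -/
def Unlinked (A B : Set 𝕊) : Prop := ∃ x, A ⊆ connectedComponentIn Bᶜ x

theorem AddCircle.norm_nsmul_of_mul_norm_le {p : ℝ} (hp : p ≠ 0) (n : ℕ) {u : AddCircle p}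
    (hu : n * ‖u‖ ≤ |p| / 2) : ‖n • u‖ = n * ‖u‖ := by
  induction u using QuotientAddGroup.induction_on with
  | H x =>
  set y := x - round (p⁻¹ * x) * p
  have hy : (y : AddCircle p) = x := by
    rw [AddCircle.coe_sub, sub_eq_self, AddCircle.coe_eq_zero_iff]
    exact ⟨round (p⁻¹ * x), by simp⟩
  have hnorm : ‖(y : AddCircle p)‖ = |y| := hy ▸ AddCircle.norm_eq p
  rw [← hy, hnorm] at hu ⊢
  rw [← AddCircle.coe_nsmul, nsmul_eq_mul, (AddCircle.norm_coe_eq_abs_iff p hp).2 (by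
    rwa [abs_mul, Nat.abs_cast]), abs_mul, Nat.abs_cast]

theorem dist_md_md (d : ℕ) {x y : 𝕊} (h : d * dist x y ≤ 1 / 2) :
    dist (md d x) (md d y) = d * dist x y := by
  rw [md, md, dist_eq_norm, dist_eq_norm, ← smul_sub]
  rw [dist_eq_norm] at h
  exact AddCircle.norm_nsmul_of_mul_norm_le one_ne_zero d (by simpa using h)

section
variable {X : Type*} [MetricSpace X]

theorem finite_of_forall_exists_fun_dist_lt {ι : Type*} [Finite ι]
    (h : ∀ ε > 0, ∃ f : X → ι, ∀ x y, f x = f y → dist x y < ε) : Finite X := by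
  classical
  have := Fintype.ofFinite ι
  by_contra hX
  rw [not_finite_iff_infinite] at hX
  obtain ⟨F, hF⟩ := Infinite.exists_subset_card_eq X (Fintype.card ι + 2)
  obtain ⟨a, ha, b, hb, hab⟩ := Finset.one_lt_card.1 (by omega : 1 < F.card)
  have hne : F.offDiag.Nonempty := ⟨(a, b), Finset.mem_offDiag.2 ⟨ha, hb, hab⟩⟩
  set ε := F.offDiag.inf' hne fun p => dist p.1 p.2
  have hε : 0 < ε := (Finset.lt_inf'_iff _).2 fun p hp => dist_pos.2 (Finset.mem_offDiag.1 hp).2.2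
  obtain ⟨f, hf⟩ := h ε hε
  obtain ⟨x, hx, y, hy, hxy, hfxy⟩ := Finset.exists_ne_map_eq_of_card_lt_of_maps_to
    (s := F) (t := Finset.univ) (by simp; omega)
    fun z _ => Finset.mem_coe.2 (Finset.mem_univ (f z))
  have hmin : ε ≤ dist x y :=
    Finset.inf'_le (fun p : X × X => dist p.1 p.2) (b := (x, y))
      (Finset.mem_offDiag.2 ⟨hx, hy, hxy⟩)
  exact (hf x y hfxy).not_ge hmin

theorem exists_finite_fun_dist_lt_of_eq [CompactSpace X] {ε : ℝ} (hε : 0 < ε) :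
    ∃ t : Set X, t.Finite ∧ ∃ f : X → t, ∀ x y, f x = f y → dist x y < ε := by
  obtain ⟨t, -, ht, hcover⟩ :=
    finite_cover_balls_of_compact (isCompact_univ (X := X)) (half_pos hε)
  have hmem : ∀ x, ∃ z : t, x ∈ Metric.ball (z : X) (ε / 2) := fun x => by
    simpa using hcover (mem_univ x)
  choose f hf using hmem
  refine ⟨t, ht, f, fun x y hxy => ?_⟩
  have hy := hf y
  rw [← hxy, Metric.mem_ball] at hy
  calc dist x y ≤ dist x (f x) + dist y (f x) := dist_triangle_right _ _ _
    _ < ε / 2 + ε / 2 := add_lt_add (Metric.mem_ball.1 (hf x)) hy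
    _ = ε := add_halves ε

namespace Homeomorph
variable [CompactSpace X] (e : X ≃ₜ X) {c r : ℝ}

theorem exists_pow_mul_dist_le_dist_iterate (hc : 1 ≤ c) (hr : 0 < r)
    (hexp : ∀ x y, dist x y < r → c * dist x y ≤ dist (e x) (e y)) :
    ∃ δ > 0, ∀ n x y, dist (e^[n] x) (e^[n] y) < δ →
      c ^ n * dist x y ≤ dist (e^[n] x) (e^[n] y) := by
  obtain ⟨δ, hδ, hsymm⟩ := Metric.uniformContinuous_iff.1
    (CompactSpace.uniformContinuous_of_continuous e.symm.continuous) r hr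
  refine ⟨min δ r, lt_min hδ hr, fun n => ?_⟩
  induction n with
  | zero => simp
  | succ n ih =>
    intro x y h
    rw [Function.iterate_succ_apply', Function.iterate_succ_apply'] at h ⊢
    set a := e^[n] x
    set b := e^[n] y
    have hab : dist a b < r := by simpa using hsymm (h.trans_le (min_le_left _ _))
    have hexp_ab := hexp a b hab
    have hab' : dist a b < min δ r :=
      ((le_mul_of_one_le_left dist_nonneg hc).trans hexp_ab).trans_lt h
    calc c ^ (n + 1) * dist x y = c * (c ^ n * dist x y) := by ring
      _ ≤ c * dist a b := mul_le_mul_of_nonneg_left (ih x y hab') (by linarith)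
      _ ≤ dist (e a) (e b) := hexp_ab

theorem finite_of_locally_expanding (hc : 1 < c) (hr : 0 < r)
    (hexp : ∀ x y, dist x y < r → c * dist x y ≤ dist (e x) (e y)) : Finite X := by
  obtain ⟨δ, hδ, hiter⟩ := e.exists_pow_mul_dist_le_dist_iterate hc.le hr hexp
  obtain ⟨t, ht, f, hf⟩ := exists_finite_fun_dist_lt_of_eq (X := X) hδ
  have := ht.to_subtype
  refine finite_of_forall_exists_fun_dist_lt (ι := t) fun ε hε => ?_
  obtain ⟨n, hn⟩ := pow_unbounded_of_one_lt (δ / ε) hc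
  refine ⟨f ∘ e^[n], fun x y hxy => ?_⟩
  have hclose := hf _ _ hxy
  rw [div_lt_iff₀ hε] at hn
  have hlt : c ^ n * dist x y < c ^ n * ε := by linarith [hiter n x y hclose]
  exact lt_of_mul_lt_mul_left hlt (by positivity)

end Homeomorph
end

/-- If `E ⊆ ℝ/ℤ` is closed and `m_d` maps `E` homeomorphically onto itself (d ≥ 2),
then `E` is finite. -/
theorem douady_lemma (d : ℕ) (hd : 2 ≤ d) (E : Set 𝕊) (hE : IsClosed E)
    (h : ∃ e : E ≃ₜ E, ∀ x : E, (e x : 𝕊) = md d (x : 𝕊)) :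
    E.Finite := by
  obtain ⟨e, he⟩ := h
  have := isCompact_iff_compactSpace.1 hE.isCompact
  refine Set.finite_coe_iff.1 (e.finite_of_locally_expanding (c := d) (r := 1 / (2 * d))
    (by exact_mod_cast hd) (by positivity) fun x y hxy => ?_)
  have hsmall : d * dist (x : 𝕊) y ≤ 1 / 2 := by
    rw [Subtype.dist_eq, lt_div_iff₀ (by positivity)] at hxy; linarith
  rw [Subtype.dist_eq, Subtype.dist_eq, he, he, dist_md_md d hsmall]
end
end

section
/- The relation of being unlinked is symmetric: for subsets A, A' of the circle ℝ/ℤ each with at least two points, if A is contained in a connected component of (ℝ/ℤ) \ A', then A' is contained in a connected component of (ℝ/ℤ) \ A. -/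
/-!
Cutting the circle at a point outside a connected set `C` turns `C` into an interval `W` of the
open cut interval; the complement of `W` in the closed cut interval consists of two intervals
whose images share the cut point, so `Cᶜ` is connected too. If `A` lies in the component `C` of
`A'ᶜ`, then `A'` lies in the connected set `Cᶜ`, which avoids `A`.
-/

open Set MeasureTheory Topology

noncomputable section

theorem Set.OrdConnected.isPreconnected_image_Icc_diff
    {α X : Type*} [ConditionallyCompleteLinearOrder α] [DenselyOrdered α]
    [TopologicalSpace α] [OrderTopology α] [TopologicalSpace X]
    {f : α → X} {a b : α} {W : Set α} (hW : W.OrdConnected) (hWab : W ⊆ Ioo a b) (hab : a ≤ b)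
    (hf : ContinuousOn f (Icc a b)) (hfab : f a = f b) :
    IsPreconnected (f '' (Icc a b \ W)) := by
  set L₁ := Icc a b ∩ ⋂ w ∈ W, Iio w
  set L₂ := Icc a b ∩ ⋂ w ∈ W, Ioi w
  have hsplit : Icc a b \ W = L₁ ∪ L₂ := by
    ext r
    simp only [L₁, L₂, mem_sdiff, mem_union, mem_inter_iff, mem_iInter₂, mem_Iio, mem_Ioi]
    constructor
    · rintro ⟨hr, hrW⟩
      by_contra! hne
      obtain ⟨w₁, hw₁, hw₁r⟩ := hne.1 hr
      obtain ⟨w₂, hw₂, hrw₂⟩ := hne.2 hr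
      exact hrW (hW.out hw₁ hw₂ ⟨hw₁r, hrw₂⟩)
    · rintro (⟨hr, hlt⟩ | ⟨hr, hgt⟩)
      · exact ⟨hr, fun hrW => (hlt r hrW).false⟩
      · exact ⟨hr, fun hrW => (hgt r hrW).false⟩
  have haL₁ : a ∈ L₁ :=
    ⟨left_mem_Icc.2 hab, mem_iInter₂.2 fun w hw => (hWab hw).1⟩
  have hbL₂ : b ∈ L₂ :=
    ⟨right_mem_Icc.2 hab, mem_iInter₂.2 fun w hw => (hWab hw).2⟩
  have hL₁ : IsPreconnected (f '' L₁) :=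
    (ordConnected_Icc.inter (ordConnected_biInter fun _ _ => ordConnected_Iio)).isPreconnected.image
      f (hf.mono inter_subset_left)
  have hL₂ : IsPreconnected (f '' L₂) :=
    (ordConnected_Icc.inter (ordConnected_biInter fun _ _ => ordConnected_Ioi)).isPreconnected.image
      f (hf.mono inter_subset_left)
  rw [hsplit, image_union]
  exact hL₁.union (f a) (mem_image_of_mem f haL₁) (hfab ▸ mem_image_of_mem f hbL₂) hL₂

theorem AddCircle.isPreconnected_compl {p : ℝ} [Fact (0 < p)] {s : Set (AddCircle p)}
    (hs : IsPreconnected s) : IsPreconnected sᶜ := by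
  rcases eq_or_ne s univ with rfl | hne
  · simpa using isPreconnected_empty
  obtain ⟨y, hy⟩ := (ne_univ_iff_exists_notMem s).1 hne
  obtain ⟨a, rfl⟩ := QuotientAddGroup.mk_surjective y
  set e := AddCircle.openPartialHomeomorphCoe p a
  have hse : s ⊆ e.target := fun z hz hza => hy (hza ▸ hz)
  set W := Ioo a (a + p) ∩ (↑) ⁻¹' s
  have hW : IsPreconnected W := by
    rw [show W = e.symm '' s from (e.symm_image_eq_source_inter_preimage hse).symm]
    exact hs.image _ (e.continuousOn_symm.mono hse)
  have hcoe : ((a + p : ℝ) : AddCircle p) = a := AddCircle.coe_add_period p a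
  have hcompl : sᶜ = (↑) '' (Icc a (a + p) \ W) := by
    ext z
    constructor
    · intro hz
      obtain ⟨r, hr, rfl⟩ : z ∈ ((↑) : ℝ → AddCircle p) '' Icc a (a + p) := by
        rw [AddCircle.coe_image_Icc_eq]; trivial
      exact ⟨r, ⟨hr, fun hrW => hz hrW.2⟩, rfl⟩
    · rintro ⟨r, ⟨hr, hrW⟩, rfl⟩ hrs
      rcases eq_endpoints_or_mem_Ioo_of_mem_Icc hr with rfl | rfl | hr'
      · exact hy hrs
      · exact hy (hcoe ▸ hrs)
      · exact hrW ⟨hr', hrs⟩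
  rw [hcompl]
  exact hW.ordConnected.isPreconnected_image_Icc_diff inter_subset_left
    (by linarith [(Fact.out : 0 < p)]) (AddCircle.continuous_mk' p).continuousOn hcoe.symm

theorem unlinked_symm_general (A A' : Set 𝕊) (h : Unlinked A A') : Unlinked A' A := by
  obtain ⟨x, hA⟩ := h
  set C := connectedComponentIn A'ᶜ x
  rcases A'.eq_empty_or_nonempty with rfl | ⟨y, hy⟩
  · exact ⟨x, empty_subset _⟩
  have hA'C : A' ⊆ Cᶜ := fun z hz hzC => connectedComponentIn_subset _ _ hzC hz
  refine ⟨y, hA'C.trans ?_⟩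
  exact (AddCircle.isPreconnected_compl isPreconnected_connectedComponentIn
    ).subset_connectedComponentIn (hA'C hy) (compl_subset_compl.2 hA)

/-- The unlinked relation is symmetric for disjoint finite subsets of the circle,
each with at least two points. -/
theorem unlinked_symm (A A' : Set 𝕊) (hA : A.Finite) (hA' : A'.Finite)
    (hdisj : Disjoint A A') (h2 : 2 ≤ A.ncard) (h2' : 2 ≤ A'.ncard)
    (h : Unlinked A A') : Unlinked A' A :=
  unlinked_symm_general A A' h
end
end

section
/- Let λ be an equivalence relation on ℚ/ℤ whose classes are finite and pairwise unlinked, such that m_d maps classes onto classes, and such that whenever (t_1,t_2) is a connected component of (ℝ/ℤ)\A for a class A, then (dt_1,dt_2) is a connected component of (ℝ/ℤ)\m_d(A). Suppose Θ = {Θ_1,…,Θ_m} is a degree-d critical portrait such that each Θ_i contained in ℚ/ℤ lies inside a single λ-class and each other Θ_i is unlinked with every λ-class. Then every λ-class is contained in a single Λ_ℚ(Θ)-class, i.e. λ ⊆ Λ_ℚ(Θ). -/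
open Set MeasureTheory Topology

noncomputable section

/-- A degree-`d` critical portrait: a finite collection of finite subsets of `ℝ/ℤ`,
each with at least two elements and a singleton image under `m_d`, pairwise unlinked,
with `Σ (|Θ_j| - 1) = d - 1`. -/
structure CriticalPortrait (d : ℕ) where
  sets : Finset (Set 𝕊)
  finite : ∀ A ∈ sets, A.Finite
  two_le : ∀ A ∈ sets, 2 ≤ A.ncard
  image_ncard : ∀ A ∈ sets, ((md d) '' A).ncard = 1
  pairwise_unlinked : ∀ A ∈ sets, ∀ B ∈ sets, A ≠ B → Unlinked A B
  sum_card : ∑ A ∈ sets, (A.ncard - 1) = d - 1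

namespace CriticalPortrait

variable {d : ℕ}

/-- The union `Θ_1 ∪ ⋯ ∪ Θ_m` of the sets of a critical portrait. -/
def union (P : CriticalPortrait d) : Set 𝕊 := ⋃₀ (↑P.sets : Set (Set 𝕊))

/-- `t` and `t'` are `Θ`-unlinked equivalent: neither lies in `Θ_1 ∪ ⋯ ∪ Θ_m` and
`{t, t'}, Θ_1, …, Θ_m` are pairwise unlinked. -/
def equiv (P : CriticalPortrait d) (t t' : 𝕊) : Prop :=
  t ∉ P.union ∧ t' ∉ P.union ∧ ∀ A ∈ P.sets, Unlinked {t, t'} A ∧ Unlinked A {t, t'}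

/-- `L` is a `Θ`-unlinked class. -/
def IsUnlinkedClass (P : CriticalPortrait d) (L : Set 𝕊) : Prop :=
  ∃ t, t ∉ P.union ∧ L = {t' | P.equiv t t'}

end CriticalPortrait

/-- The open arc `(t, t + ε)` immediately to the right of `t`. -/
def rightSegment (t : 𝕊) (ε : ℝ) : Set 𝕊 :=
  {s | ∃ x : ℝ, (x : 𝕊) = t ∧ ∃ y ∈ Set.Ioo x (x + ε), (y : 𝕊) = s}

/-- The open arc `(t - ε, t)` immediately to the left of `t`. -/
def leftSegment (t : 𝕊) (ε : ℝ) : Set 𝕊 :=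
  {s | ∃ x : ℝ, (x : 𝕊) = t ∧ ∃ y ∈ Set.Ioo (x - ε) x, (y : 𝕊) = s}

/-- `L` is the right itinerary `itin⁺_Θ(t)`: for each `n`, `L n` is a `Θ`-unlinked class
containing a small interval immediately to the right of `dⁿt`. -/
def IsRightItin (d : ℕ) (P : CriticalPortrait d) (t : 𝕊) (L : ℕ → Set 𝕊) : Prop :=
  ∀ n, P.IsUnlinkedClass (L n) ∧ ∃ ε > (0:ℝ), rightSegment ((md d)^[n] t) ε ⊆ L n

/-- `L` is the left itinerary `itin⁻_Θ(t)`. -/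
def IsLeftItin (d : ℕ) (P : CriticalPortrait d) (t : 𝕊) (L : ℕ → Set 𝕊) : Prop :=
  ∀ n, P.IsUnlinkedClass (L n) ∧ ∃ ε > (0:ℝ), leftSegment ((md d)^[n] t) ε ⊆ L n

/-- `L` is one of the two one-sided itineraries of `t`. -/
def HasItin (d : ℕ) (P : CriticalPortrait d) (t : 𝕊) (L : ℕ → Set 𝕊) : Prop :=
  IsRightItin d P t L ∨ IsLeftItin d P t L

/-- One of the one-sided itineraries of `t` coincides with one of the one-sided
itineraries of `t'`. -/
def ItinEq (d : ℕ) (P : CriticalPortrait d) (t t' : 𝕊) : Prop :=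
  ∃ L, HasItin d P t L ∧ HasItin d P t' L

/-- `t` is a rational point of `ℝ/ℤ`, i.e. `t ∈ ℚ/ℤ`. -/
def IsRatC (t : 𝕊) : Prop := ∃ q : ℚ, ((q : ℝ) : 𝕊) = t

/-- The equivalence relation `Λ_ℚ(Θ)` on `ℚ/ℤ`: `t ∼ t'` iff there is a chain of
rationals joining them in which consecutive terms have a common one-sided itinerary. -/
def LambdaQ (d : ℕ) (P : CriticalPortrait d) (t t' : 𝕊) : Prop :=
  IsRatC t ∧ IsRatC t' ∧ Relation.ReflTransGen (fun a b => IsRatC b ∧ ItinEq d P a b) t t'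

/-- `C` is the connected component of `(ℝ/ℤ) \ A` "equal to the arc `(t₁, t₂)`": it is a
connected component of the complement of `A`, containing an interval immediately to the
right of `t₁` and an interval immediately to the left of `t₂`, with `t₁, t₂` in its
closure. -/
def CompOfEnds (A : Set 𝕊) (t1 t2 : 𝕊) (C : Set 𝕊) : Prop :=
  (∃ x, x ∉ A ∧ C = connectedComponentIn Aᶜ x) ∧
  t1 ∈ closure C ∧ t2 ∈ closure C ∧
  (∃ ε > (0:ℝ), rightSegment t1 ε ⊆ C) ∧ (∃ ε > (0:ℝ), leftSegment t2 ε ⊆ C)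

/-!
Order a `λ`-class `A` along the circle: any two of its points are joined by a chain of
consecutive ones, so it suffices to show `itin⁺_Θ(t₁) = itin⁻_Θ(t₂)` when `(t₁, t₂)` is a gap
of `A`. By invariance, `dⁿt₁` and `dⁿt₂` bound a gap of the class `m_dⁿ(A)` for every `n`.
That gap is the open arc between them, and no `Θ_i` is separated by a `λ`-class, so each `Θ_i`
lies either inside the arc or outside it. Hence points just to the right of `dⁿt₁` and just to
the left of `dⁿt₂` are pairwise `Θ`-unlinked equivalent: they lie in one `Θ`-unlinked class,
which is the `n`-th entry of both itineraries.
-/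

def arc (x y : ℝ) : Set 𝕊 := ((↑) : ℝ → 𝕊) '' Ioo x y

lemma exists_coe_eq_mem_Ioc (s : 𝕊) (x : ℝ) : ∃ y ∈ Ioc x (x + 1), (y : 𝕊) = s :=
  ⟨AddCircle.equivIoc 1 x s, (AddCircle.equivIoc 1 x s).2, AddCircle.coe_equivIoc⟩

lemma isOpen_arc (x y : ℝ) : IsOpen (arc x y) :=
  QuotientAddGroup.isOpenMap_coe _ isOpen_Ioo

lemma isPreconnected_arc (x y : ℝ) : IsPreconnected (arc x y) :=
  isPreconnected_Ioo.image _ (AddCircle.continuous_mk' 1).continuousOn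

lemma coe_mem_arc {x y w : ℝ} (hw : w ∈ Ioo x y) : (w : 𝕊) ∈ arc x y := mem_image_of_mem _ hw

lemma arc_mono {x y x' y' : ℝ} (hx : x' ≤ x) (hy : y ≤ y') : arc x y ⊆ arc x' y' :=
  image_mono (Ioo_subset_Ioo hx hy)

lemma arc_nonempty {x y : ℝ} (h : x < y) : (arc x y).Nonempty :=
  (nonempty_Ioo.2 h).image _

lemma arc_add {c : ℝ} (hc : (c : 𝕊) = 0) (x y : ℝ) : arc (x + c) (y + c) = arc x y := by
  rw [arc, ← image_add_const_Ioo, image_image]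
  simp only [AddCircle.coe_add, hc, add_zero]
  rfl

lemma arc_add_one (x y : ℝ) : arc (x + 1) (y + 1) = arc x y :=
  arc_add (AddCircle.coe_period 1) x y

lemma coe_notMem_arc {x y w : ℝ} (hw : w ∈ Icc y (x + 1)) : (w : 𝕊) ∉ arc x y := by
  rintro ⟨v, hv, hvw⟩
  have hw' : ((w - 1 : ℝ) : 𝕊) = w := by simp
  rw [← hw', AddCircle.coe_eq_coe_iff_of_mem_Ico (a := w - 1)] at hvw
  · linarith [hv.1, hw.2]
  · constructor <;> linarith [hv.1, hv.2, hw.1, hw.2]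
  · constructor <;> linarith

lemma disjoint_arc_arc {x y z : ℝ} (hz : z ≤ x + 1) : Disjoint (arc x y) (arc y z) := by
  rw [disjoint_left]
  rintro _ ⟨w, hw, rfl⟩
  rw [← AddCircle.coe_add_period]
  exact coe_notMem_arc ⟨by linarith [hw.1], by linarith [hw.2]⟩

lemma arc_diff_subset (x y z : ℝ) : arc x z \ {(y : 𝕊)} ⊆ arc x y ∪ arc y z := by
  rintro _ ⟨⟨w, hw, rfl⟩, hwy⟩
  rcases lt_trichotomy w y with h | rfl | h
  · exact Or.inl (coe_mem_arc ⟨hw.1, h⟩)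
  · exact absurd rfl hwy
  · exact Or.inr (coe_mem_arc ⟨h, hw.2⟩)

lemma compl_singleton_subset_arc (x : ℝ) : {(x : 𝕊)}ᶜ ⊆ arc x (x + 1) := by
  intro s hs
  obtain ⟨w, hw, rfl⟩ := exists_coe_eq_mem_Ioc s x
  refine coe_mem_arc ⟨hw.1, hw.2.lt_of_ne ?_⟩
  rintro rfl
  exact hs (AddCircle.coe_add_period 1 x)

lemma rightSegment_coe (x ε : ℝ) : rightSegment (x : 𝕊) ε = arc x (x + ε) := by
  ext s
  constructor
  · rintro ⟨x', hx', y, hy, rfl⟩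
    have hc : ((x' - x : ℝ) : 𝕊) = 0 := by rw [AddCircle.coe_sub, hx', sub_self]
    rw [← arc_add hc]
    exact coe_mem_arc ⟨by linarith [hy.1], by linarith [hy.2]⟩
  · rintro ⟨y, hy, rfl⟩
    exact ⟨x, rfl, y, hy, rfl⟩

lemma leftSegment_coe (x ε : ℝ) : leftSegment (x : 𝕊) ε = arc (x - ε) x := by
  ext s
  constructor
  · rintro ⟨x', hx', y, hy, rfl⟩
    have hc : ((x' - x : ℝ) : 𝕊) = 0 := by rw [AddCircle.coe_sub, hx', sub_self]
    rw [← arc_add hc]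
    exact coe_mem_arc ⟨by linarith [hy.1], by linarith [hy.2]⟩
  · rintro ⟨y, hy, rfl⟩
    exact ⟨x, rfl, y, hy, rfl⟩

lemma eventually_nhdsNE_coe_ne (x : ℝ) (g : 𝕊) : ∀ᶠ w : ℝ in 𝓝[≠] x, (w : 𝕊) ≠ g := by
  by_cases hg : g = x
  · subst hg
    have hnear : Ioo (x - 1 / 2) (x + 1 / 2) ∈ 𝓝[≠] x :=
      nhdsWithin_le_nhds (Ioo_mem_nhds (by linarith) (by linarith))
    filter_upwards [hnear, self_mem_nhdsWithin] with w hw hwx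
    rw [Ne, AddCircle.coe_eq_coe_iff_of_mem_Ico (a := x - 1 / 2)]
    · exact hwx
    · constructor <;> linarith [hw.1, hw.2]
    · constructor <;> linarith
  · exact nhdsWithin_le_nhds (((AddCircle.continuous_mk' 1).tendsto x).eventually_ne (Ne.symm hg))

lemma eventually_nhdsNE_coe_notMem {G : Set 𝕊} (hG : G.Finite) (x : ℝ) :
    ∀ᶠ w : ℝ in 𝓝[≠] x, (w : 𝕊) ∉ G := by
  filter_upwards [(Filter.eventually_all_finite hG).2 fun g _ => eventually_nhdsNE_coe_ne x g]
    with w hw hwG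
  exact hw _ hwG rfl

lemma exists_disjoint_arc_right {G : Set 𝕊} (hG : G.Finite) (x : ℝ) :
    ∃ ε > 0, Disjoint G (arc x (x + ε)) := by
  obtain ⟨u, hxu, hu⟩ := mem_nhdsGT_iff_exists_Ioo_subset.1
    (nhdsGT_le_nhdsNE x (eventually_nhdsNE_coe_notMem hG x))
  refine ⟨u - x, sub_pos.2 hxu, disjoint_right.2 ?_⟩
  rintro _ ⟨w, hw, rfl⟩
  exact hu (by rwa [add_sub_cancel] at hw)

lemma exists_disjoint_arc_left {G : Set 𝕊} (hG : G.Finite) (x : ℝ) :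
    ∃ ε > 0, Disjoint G (arc (x - ε) x) := by
  obtain ⟨l, hlx, hl⟩ := mem_nhdsLT_iff_exists_Ioo_subset.1
    (nhdsLT_le_nhdsNE x (eventually_nhdsNE_coe_notMem hG x))
  refine ⟨x - l, sub_pos.2 hlx, disjoint_right.2 ?_⟩
  rintro _ ⟨w, hw, rfl⟩
  exact hl (by rwa [sub_sub_cancel] at hw)

lemma IsPreconnected.subset_arc_of_subset_arc_diff {K : Set 𝕊} (hK : IsPreconnected K)
    {x y z : ℝ} (hz : z ≤ x + 1) (hKsub : K ⊆ arc x z \ {(y : 𝕊)})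
    (hKx : (K ∩ arc x y).Nonempty) : K ⊆ arc x y :=
  hK.subset_left_of_subset_union (isOpen_arc _ _) (isOpen_arc _ _) (disjoint_arc_arc hz)
    (hKsub.trans (arc_diff_subset x y z)) hKx

lemma connectedComponentIn_compl_eq_arc {F : Set 𝕊} {α β : ℝ} (hαβ : α < β)
    (hβ : β ≤ α + 1) (hαF : (α : 𝕊) ∈ F) (hβF : (β : 𝕊) ∈ F) {x : 𝕊}
    (hright : ∃ ε > 0, arc α (α + ε) ⊆ connectedComponentIn Fᶜ x)
    (hleft : ∃ ε > 0, arc (β - ε) β ⊆ connectedComponentIn Fᶜ x) :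
    connectedComponentIn Fᶜ x = arc α β := by
  set C := connectedComponentIn Fᶜ x
  have hCF : C ⊆ Fᶜ := connectedComponentIn_subset _ _
  have hC : IsPreconnected C := isPreconnected_connectedComponentIn
  have near_left : ∀ y > α, (C ∩ arc α y).Nonempty := by
    intro y hy
    obtain ⟨ε, hε, hεC⟩ := hright
    have hδ : α < α + min ε (y - α) := by have := lt_min hε (sub_pos.2 hy); linarith
    obtain ⟨p, hp⟩ := arc_nonempty hδ
    exact ⟨p, hεC (arc_mono le_rfl (by linarith [min_le_left ε (y - α)]) hp),
      arc_mono le_rfl (by linarith [min_le_right ε (y - α)]) hp⟩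
  have near_right : ∀ y < β, (C ∩ arc y β).Nonempty := by
    intro y hy
    obtain ⟨ε, hε, hεC⟩ := hleft
    have hδ : β - min ε (β - y) < β := by have := lt_min hε (sub_pos.2 hy); linarith
    obtain ⟨p, hp⟩ := arc_nonempty hδ
    exact ⟨p, hεC (arc_mono (by linarith [min_le_left ε (β - y)]) le_rfl hp),
      arc_mono (by linarith [min_le_right ε (β - y)]) le_rfl hp⟩
  have hCarc : C ⊆ arc α β := by
    refine hC.subset_arc_of_subset_arc_diff le_rfl (fun s hs => ⟨?_, ?_⟩) (near_left β hαβ)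
    · exact compl_singleton_subset_arc α fun h => hCF hs (h ▸ hαF)
    · exact fun h => hCF hs ((mem_singleton_iff.1 h) ▸ hβF)
  have hFarc : Disjoint F (arc α β) := by
    refine disjoint_right.2 ?_
    rintro _ ⟨γ, hγ, rfl⟩ hγF
    have hCγ : C ⊆ arc α γ := hC.subset_arc_of_subset_arc_diff hβ
      (fun s hs => ⟨hCarc hs, fun h => hCF hs ((mem_singleton_iff.1 h) ▸ hγF)⟩)
      (near_left γ hγ.1)
    obtain ⟨p, hpC, hpγ⟩ := near_right γ hγ.2
    exact disjoint_left.1 (disjoint_arc_arc hβ) (hCγ hpC) hpγ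
  obtain ⟨p, hpC, hparc⟩ := near_left β hαβ
  refine hCarc.antisymm ?_
  rw [show C = connectedComponentIn Fᶜ p from connectedComponentIn_eq hpC]
  exact (isPreconnected_arc α β).subset_connectedComponentIn hparc hFarc.symm.subset_compl_right

lemma Unlinked.mono_left {A A' B : Set 𝕊} (h : Unlinked A' B) (hA : A ⊆ A') : Unlinked A B :=
  let ⟨x, hx⟩ := h
  ⟨x, hA.trans hx⟩

lemma unlinked_of_isPreconnected {A B K : Set 𝕊} (hK : IsPreconnected K) {x : 𝕊} (hx : x ∈ K)
    (hAK : A ⊆ K) (hKB : Disjoint K B) : Unlinked A B :=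
  ⟨x, hAK.trans (hK.subset_connectedComponentIn hx hKB.subset_compl_right)⟩

lemma disjoint_or_subset_connectedComponentIn {X : Type*} [TopologicalSpace X] {S A : Set X}
    {x y : X} (hA : A ⊆ connectedComponentIn S x) :
    Disjoint A (connectedComponentIn S y) ∨ A ⊆ connectedComponentIn S y := by
  by_cases h : Disjoint (connectedComponentIn S x) (connectedComponentIn S y)
  · exact Or.inl (h.mono_left hA)
  · obtain ⟨z, hzx, hzy⟩ := not_disjoint_iff.1 h
    right
    rwa [connectedComponentIn_eq hzy, ← connectedComponentIn_eq hzx]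

lemma unlinked_pair_of_disjoint_arc_of_le {A : Set 𝕊} {a b x y : ℝ} (hb : b ≤ a + 1)
    (hx : x ∈ Ioo a b) (hy : y ∈ Ioo a b) (hxy : x ≤ y) (hA : Disjoint A (arc a b)) :
    Unlinked A {(x : 𝕊), (y : 𝕊)} := by
  refine unlinked_of_isPreconnected (isPreconnected_arc y (x + 1)) (x := b)
    (coe_mem_arc ⟨hy.2, by linarith [hx.1]⟩) ?_ ?_
  · intro s hs
    obtain ⟨γ, hγ, rfl⟩ := exists_coe_eq_mem_Ioc s a
    have hbγ : b ≤ γ := not_lt.1 fun h => disjoint_left.1 hA hs (coe_mem_arc ⟨hγ.1, h⟩)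
    exact coe_mem_arc ⟨by linarith [hy.2], by linarith [hγ.2, hx.1]⟩
  · rw [disjoint_insert_right, disjoint_singleton_right, ← AddCircle.coe_add_period 1 x,
      ← AddCircle.coe_add_period 1 y]
    exact ⟨coe_notMem_arc ⟨le_rfl, by linarith⟩, coe_notMem_arc ⟨by linarith, le_rfl⟩⟩

lemma unlinked_pair_of_disjoint_arc {A : Set 𝕊} {a b : ℝ} (hb : b ≤ a + 1) {u v : 𝕊}
    (hu : u ∈ arc a b) (hv : v ∈ arc a b) (hA : Disjoint A (arc a b)) :
    Unlinked {u, v} A ∧ Unlinked A {u, v} := by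
  refine ⟨unlinked_of_isPreconnected (isPreconnected_arc a b) hu (insert_subset hu
    (singleton_subset_iff.2 hv)) hA.symm, ?_⟩
  obtain ⟨x, hx, rfl⟩ := hu
  obtain ⟨y, hy, rfl⟩ := hv
  rcases le_total x y with hxy | hyx
  · exact unlinked_pair_of_disjoint_arc_of_le hb hx hy hxy hA
  · rw [pair_comm]
    exact unlinked_pair_of_disjoint_arc_of_le hb hy hx hyx hA

lemma compOfEnds_of_disjoint_arc {F : Set 𝕊} {α β : ℝ} (hαβ : α < β)
    (hF : Disjoint F (arc α β)) : ∃ C, CompOfEnds F α β C := by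
  have hmid : ((α + β) / 2 : ℝ) ∈ Ioo α β := ⟨by linarith, by linarith⟩
  set C := connectedComponentIn Fᶜ (((α + β) / 2 : ℝ) : 𝕊)
  have harcC : arc α β ⊆ C :=
    (isPreconnected_arc α β).subset_connectedComponentIn (coe_mem_arc hmid)
      hF.symm.subset_compl_right
  have hcl : ∀ w ∈ Icc α β, (w : 𝕊) ∈ closure C := fun w hw =>
    closure_mono harcC (image_closure_subset_closure_image (AddCircle.continuous_mk' 1)
      ⟨w, (closure_Ioo hαβ.ne).symm ▸ hw, rfl⟩)
  refine ⟨C, ⟨_, fun h => disjoint_left.1 hF h (coe_mem_arc hmid), rfl⟩,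
    hcl α (left_mem_Icc.2 hαβ.le), hcl β (right_mem_Icc.2 hαβ.le),
    ⟨β - α, sub_pos.2 hαβ, ?_⟩, ⟨β - α, sub_pos.2 hαβ, ?_⟩⟩
  · rwa [rightSegment_coe, add_sub_cancel]
  · rwa [leftSegment_coe, sub_sub_cancel]

lemma reflTransGen_of_finite {F : Set 𝕊} (hF : F.Finite) {R : 𝕊 → 𝕊 → Prop}
    (hR : ∀ α β : ℝ, α < β → (α : 𝕊) ∈ F → (β : 𝕊) ∈ F →
      Disjoint F (arc α β) → R α β)
    {a b : 𝕊} (ha : a ∈ F) (hb : b ∈ F) : Relation.ReflTransGen R a b := by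
  obtain ⟨α, -, rfl⟩ := exists_coe_eq_mem_Ioc a 0
  obtain ⟨β, ⟨hαβ, hβ⟩, rfl⟩ := exists_coe_eq_mem_Ioc b α
  induction hn : (F ∩ arc α β).ncard using Nat.strong_induction_on generalizing α β with
  | _ n ih =>
  by_cases hdisj : Disjoint F (arc α β)
  · exact .single (hR α β hαβ ha hb hdisj)
  obtain ⟨_, hγF, γ, hγ, rfl⟩ := not_disjoint_iff.1 hdisj
  have hlt : ∀ x y, arc x y ⊆ arc α β → (γ : 𝕊) ∉ arc x y → (F ∩ arc x y).ncard < n :=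
    fun x y hsub hγxy => hn ▸ ncard_lt_ncard ((ssubset_iff_of_subset
      (inter_subset_inter_right F hsub)).2 ⟨γ, ⟨hγF, coe_mem_arc hγ⟩, fun h => hγxy h.2⟩)
      (hF.inter_of_left _)
  refine (ih _ (hlt α γ (arc_mono le_rfl hγ.2.le) ?_) α ha γ hγ.1 (by linarith [hγ.2]) hγF
    rfl).trans (ih _ (hlt γ β (arc_mono hγ.1.le le_rfl) ?_) γ hγF β hγ.2 (by linarith [hγ.1])
    hb rfl)
  · exact coe_notMem_arc ⟨le_rfl, by linarith [hγ.2]⟩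
  · rw [← AddCircle.coe_add_period]
    exact coe_notMem_arc ⟨by linarith [hγ.1], le_rfl⟩

namespace CriticalPortrait

variable {d : ℕ} (P : CriticalPortrait d)

def UnseparatedBy (F : Set 𝕊) : Prop := ∀ A ∈ P.sets, A ⊆ F ∨ Unlinked A F

lemma finite_union : P.union.Finite :=
  (P.sets.finite_toSet).sUnion fun A hA => P.finite A hA

variable {P}

lemma equiv_of_mem_arc {α β ε : ℝ} (hεβ : 2 * ε ≤ β - α) (hβ : β ≤ α + 1)
    (hright : Disjoint P.union (arc α (α + ε))) (hleft : Disjoint P.union (arc (β - ε) β))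
    (hsep : ∀ A ∈ P.sets, Disjoint A (arc α β) ∨ A ⊆ arc α β)
    {u v : 𝕊} (hu : u ∈ arc α (α + ε)) (hv : v ∈ arc α (α + ε) ∪ arc (β - ε) β) :
    P.equiv u v := by
  refine ⟨disjoint_right.1 hright hu,
    hv.elim (fun h => disjoint_right.1 hright h) (fun h => disjoint_right.1 hleft h),
    fun A hA => ?_⟩
  have hAP : A ⊆ P.union := subset_sUnion_of_mem hA
  have hε : 0 < ε := by
    obtain ⟨w, hw, -⟩ := hu
    linarith [hw.1, hw.2]
  rcases hv with hv | hv
  · exact unlinked_pair_of_disjoint_arc (by linarith) hu hv (hright.mono_left hAP)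
  rcases hsep A hA with hdisj | hsub
  · exact unlinked_pair_of_disjoint_arc hβ (arc_mono le_rfl (by linarith) hu)
      (arc_mono (by linarith) le_rfl hv) hdisj
  -- `A` sits in `[α + ε, β - ε]`, so it misses the arc from `β - ε` round to `α + ε`.
  refine unlinked_pair_of_disjoint_arc (a := β - ε) (b := α + 1 + ε) (by linarith) ?_
    (arc_mono le_rfl (by linarith) hv) (disjoint_left.2 fun s hs => ?_)
  · rw [← arc_add_one] at hu
    exact arc_mono (by linarith) (by linarith) hu
  obtain ⟨w, hw, rfl⟩ := hsub hs
  have hαw : α + ε ≤ w := not_lt.1 fun h =>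
    disjoint_left.1 hright (hAP hs) (coe_mem_arc ⟨hw.1, h⟩)
  have hwβ : w ≤ β - ε := not_lt.1 fun h =>
    disjoint_left.1 hleft (hAP hs) (coe_mem_arc ⟨h, hw.2⟩)
  rw [← AddCircle.coe_add_period]
  exact coe_notMem_arc ⟨by linarith, by linarith⟩

lemma exists_isUnlinkedClass_of_compOfEnds {F : Set 𝕊} (hF : P.UnseparatedBy F) {a b : 𝕊}
    (ha : a ∈ F) (hb : b ∈ F) {C : Set 𝕊} (hC : CompOfEnds F a b C) :
    ∃ L, P.IsUnlinkedClass L ∧ ∃ ε > (0 : ℝ), rightSegment a ε ⊆ L ∧ leftSegment b ε ⊆ L := by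
  obtain ⟨⟨x, -, rfl⟩, -, -, hright, hleft⟩ := hC
  obtain ⟨α, -, rfl⟩ := exists_coe_eq_mem_Ioc a 0
  obtain ⟨β, ⟨hαβ, hβ⟩, rfl⟩ := exists_coe_eq_mem_Ioc b α
  simp only [rightSegment_coe, leftSegment_coe] at hright hleft
  have hCeq := connectedComponentIn_compl_eq_arc hαβ hβ ha hb hright hleft
  have hsep : ∀ A ∈ P.sets, Disjoint A (arc α β) ∨ A ⊆ arc α β := by
    intro A hA
    rw [← hCeq]
    rcases hF A hA with hAF | ⟨y, hy⟩
    · exact Or.inl (disjoint_compl_right.mono hAF (connectedComponentIn_subset _ _))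
    · exact disjoint_or_subset_connectedComponentIn hy
  obtain ⟨ε₁, hε₁, h₁⟩ := exists_disjoint_arc_right P.finite_union α
  obtain ⟨ε₂, hε₂, h₂⟩ := exists_disjoint_arc_left P.finite_union β
  set ε := min (min ε₁ ε₂) ((β - α) / 2)
  have hε : 0 < ε := lt_min (lt_min hε₁ hε₂) (by linarith)
  have hεβ : 2 * ε ≤ β - α := by linarith [min_le_right (min ε₁ ε₂) ((β - α) / 2)]
  have hεε : ε ≤ min ε₁ ε₂ := min_le_left _ _
  have hright' : Disjoint P.union (arc α (α + ε)) :=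
    h₁.mono_right (arc_mono le_rfl (by linarith [min_le_left ε₁ ε₂]))
  have hleft' : Disjoint P.union (arc (β - ε) β) :=
    h₂.mono_right (arc_mono (by linarith [min_le_right ε₁ ε₂]) le_rfl)
  have hu : ((α + ε / 2 : ℝ) : 𝕊) ∈ arc α (α + ε) := coe_mem_arc ⟨by linarith, by linarith⟩
  refine ⟨{v | P.equiv (α + ε / 2 : ℝ) v}, ⟨_, disjoint_right.1 hright' hu, rfl⟩, ε, hε, ?_, ?_⟩
  · rw [rightSegment_coe]
    exact fun v hv => equiv_of_mem_arc hεβ hβ hright' hleft' hsep hu (Or.inl hv)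
  · rw [leftSegment_coe]
    exact fun v hv => equiv_of_mem_arc hεβ hβ hright' hleft' hsep hu (Or.inr hv)

/-- The itinerary witnessing `ItinEq` is both `itin⁺_Θ(a)` and `itin⁻_Θ(b)`. -/
lemma itinEq_of_forall_compOfEnds {a b : 𝕊}
    (h : ∀ n, ∃ F C, P.UnseparatedBy F ∧ (md d)^[n] a ∈ F ∧ (md d)^[n] b ∈ F ∧
      CompOfEnds F ((md d)^[n] a) ((md d)^[n] b) C) :
    ItinEq d P a b := by
  choose F C hF ha hb hC using h
  choose L hL ε hε hseg using fun n =>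
    exists_isUnlinkedClass_of_compOfEnds (hF n) (ha n) (hb n) (hC n)
  exact ⟨L, Or.inl fun n => ⟨hL n, ε n, hε n, (hseg n).1⟩,
    Or.inr fun n => ⟨hL n, ε n, hε n, (hseg n).2⟩⟩

end CriticalPortrait

lemma isRatC_md {d : ℕ} {s : 𝕊} (h : IsRatC s) : IsRatC (md d s) := by
  obtain ⟨q, rfl⟩ := h
  refine ⟨d * q, ?_⟩
  rw [md, ← AddCircle.coe_nsmul, nsmul_eq_mul]
  push_cast
  rfl

section Lamination

variable {d : ℕ} {r : 𝕊 → 𝕊 → Prop}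

lemma unseparatedBy_setOf (P : CriticalPortrait d)
    (hsymm : ∀ t t', r t t' → r t' t)
    (htrans : ∀ t t' t'', r t t' → r t' t'' → r t t'')
    (hunl : ∀ t t', IsRatC t → IsRatC t' → ¬ r t t' →
      Unlinked {s | r t s} {s | r t' s})
    (hrat : ∀ A ∈ P.sets, (∀ a ∈ A, IsRatC a) → ∃ t, IsRatC t ∧ A ⊆ {s | r t s})
    (hirr : ∀ A ∈ P.sets, ¬ (∀ a ∈ A, IsRatC a) →
      ∀ t, IsRatC t → Unlinked A {s | r t s} ∧ Unlinked {s | r t s} A)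
    {t : 𝕊} (ht : IsRatC t) : P.UnseparatedBy {s | r t s} := by
  intro A hA
  by_cases hAq : ∀ a ∈ A, IsRatC a
  · obtain ⟨t', ht', hAt'⟩ := hrat A hA hAq
    by_cases ht't : r t' t
    · exact Or.inl fun a ha => htrans t t' a (hsymm _ _ ht't) (hAt' ha)
    · exact Or.inr ((hunl t' t ht' ht ht't).mono_left hAt')
  · exact Or.inr (hirr A hA hAq t ht).1

lemma exists_compOfEnds_iterate
    (hmap : ∀ t, IsRatC t → md d '' {s | r t s} = {s | r (md d t) s})
    (hcomp : ∀ t, IsRatC t → ∀ t1 t2 C, CompOfEnds {s | r t s} t1 t2 C →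
      ∃ C', CompOfEnds (md d '' {s | r t s}) (md d t1) (md d t2) C')
    {t a b : 𝕊} {C : Set 𝕊} (ht : IsRatC t) (ha : r t a) (hb : r t b)
    (hC : CompOfEnds {s | r t s} a b C) (n : ℕ) :
    IsRatC ((md d)^[n] t) ∧ r ((md d)^[n] t) ((md d)^[n] a) ∧
      r ((md d)^[n] t) ((md d)^[n] b) ∧
      ∃ C, CompOfEnds {s | r ((md d)^[n] t) s} ((md d)^[n] a) ((md d)^[n] b) C := by
  induction n with
  | zero => exact ⟨ht, ha, hb, C, hC⟩
  | succ n ih =>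
    obtain ⟨htn, han, hbn, Cn, hCn⟩ := ih
    have hmd : ∀ s, r ((md d)^[n] t) s → r (md d ((md d)^[n] t)) (md d s) := fun s hs =>
      (hmap _ htn).subset (mem_image_of_mem (md d) hs)
    obtain ⟨C', hC'⟩ := hcomp _ htn _ _ _ hCn
    rw [hmap _ htn] at hC'
    simp only [Function.iterate_succ_apply']
    exact ⟨isRatC_md htn, hmd _ han, hmd _ hbn, C', hC'⟩

end Lamination

theorem lambda_subset_LambdaQ_general (d : ℕ) (P : CriticalPortrait d)
    (r : 𝕊 → 𝕊 → Prop)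
    (hdom : ∀ t t', r t t' → IsRatC t ∧ IsRatC t')
    (hsymm : ∀ t t', r t t' → r t' t)
    (htrans : ∀ t t' t'', r t t' → r t' t'' → r t t'')
    (hfin : ∀ t, {s | r t s}.Finite)
    (hunl : ∀ t t', IsRatC t → IsRatC t' → ¬ r t t' →
      Unlinked {s | r t s} {s | r t' s})
    (hmap : ∀ t, IsRatC t → md d '' {s | r t s} = {s | r (md d t) s})
    (hcomp : ∀ t, IsRatC t → ∀ t1 t2 C, CompOfEnds {s | r t s} t1 t2 C →
      ∃ C', CompOfEnds (md d '' {s | r t s}) (md d t1) (md d t2) C')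
    (hrat : ∀ A ∈ P.sets, (∀ a ∈ A, IsRatC a) →
      ∃ t, IsRatC t ∧ A ⊆ {s | r t s})
    (hirr : ∀ A ∈ P.sets, ¬ (∀ a ∈ A, IsRatC a) →
      ∀ t, IsRatC t → Unlinked A {s | r t s} ∧ Unlinked {s | r t s} A) :
    ∀ t t', r t t' → LambdaQ d P t t' := by
  intro t t' htt'
  have ht : IsRatC t := (hdom t t' htt').1
  refine ⟨ht, (hdom t t' htt').2,
    reflTransGen_of_finite (hfin t) ?_ (htrans _ _ _ htt' (hsymm _ _ htt')) htt'⟩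
  intro α β hαβ ha hb hdisj
  obtain ⟨C, hC⟩ := compOfEnds_of_disjoint_arc hαβ hdisj
  refine ⟨(hdom _ _ hb).2, P.itinEq_of_forall_compOfEnds fun n => ?_⟩
  obtain ⟨htn, han, hbn, Cn, hCn⟩ := exists_compOfEnds_iterate hmap hcomp ht ha hb hC n
  exact ⟨_, Cn, unseparatedBy_setOf P hsymm htrans hunl hrat hirr htn, han, hbn, hCn⟩

/-- If `λ` is an equivalence relation on `ℚ/ℤ` with finite pairwise-unlinked classes,
compatible with `m_d` in the sense that `m_d` maps classes onto classes and components
`(t₁,t₂)` of class complements to components `(dt₁,dt₂)`, and if `Θ` is a critical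
portrait each of whose rational sets lies inside a single `λ`-class while each
irrational set is unlinked with every `λ`-class, then `λ ⊆ Λ_ℚ(Θ)`. -/
theorem lambda_subset_LambdaQ (d : ℕ) (hd : 2 ≤ d) (P : CriticalPortrait d)
    (r : 𝕊 → 𝕊 → Prop)
    (hdom : ∀ t t', r t t' → IsRatC t ∧ IsRatC t')
    (hrefl : ∀ t, IsRatC t → r t t)
    (hsymm : ∀ t t', r t t' → r t' t)
    (htrans : ∀ t t' t'', r t t' → r t' t'' → r t t'')
    (hfin : ∀ t, {s | r t s}.Finite)
    (hunl : ∀ t t', IsRatC t → IsRatC t' → ¬ r t t' →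
      Unlinked {s | r t s} {s | r t' s})
    (hmap : ∀ t, IsRatC t → md d '' {s | r t s} = {s | r (md d t) s})
    (hcomp : ∀ t, IsRatC t → ∀ t1 t2 C, CompOfEnds {s | r t s} t1 t2 C →
      ∃ C', CompOfEnds (md d '' {s | r t s}) (md d t1) (md d t2) C')
    (hrat : ∀ A ∈ P.sets, (∀ a ∈ A, IsRatC a) →
      ∃ t, IsRatC t ∧ A ⊆ {s | r t s})
    (hirr : ∀ A ∈ P.sets, ¬ (∀ a ∈ A, IsRatC a) →
      ∀ t, IsRatC t → Unlinked A {s | r t s} ∧ Unlinked {s | r t s} A) :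
    ∀ t t', r t t' → LambdaQ d P t t' :=
  lambda_subset_LambdaQ_general d P r hdom hsymm htrans hfin hunl hmap hcomp hrat hirr
end
end

section
/- Let Θ be a degree-d critical portrait in which every argument occurring in Θ_1 ∪ ⋯ ∪ Θ_m is rational and strictly pre-periodic under m_d. Then Θ has aperiodic kneading: for no θ ∈ Θ_1 ∪ ⋯ ∪ Θ_m is either itinerary itin^±_Θ(θ) periodic under the one-sided shift. -/
open Set MeasureTheory Topology

noncomputable section

/-!
Suppose some `θ ∈ Θ_1 ∪ ⋯ ∪ Θ_m` had a periodic one-sided itinerary. Since `θ` is strictly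
pre-periodic, some `N > 0` is a period of the itinerary and eventually of the orbit but
`dᴺθ ≠ θ`, so at some time `n` the distinct points `X = dⁿθ` and `Y = dⁿ⁺ᴺθ` have the same image
under `m_d`: `Y = X + j/d` with `0 < j < d`. They share a one-sided itinerary, so points `ρ` and
`ρ + j/d` just beside them lie in one `Θ`-unlinked class.

Lifting `Θ` to `[ρ, ρ + 1)` gives pairwise non-crossing finite sets, each in a coset of `d⁻¹ℤ`.
Such a family inside an interval of length `ℓ` has `Σ (|Θ_i| - 1) < d ℓ`. If no `Θ_i` met both
arcs `(ρ, ρ + j/d)` and `(ρ + j/d, ρ + 1)`, the total `d - 1` would thus be at most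
`(j - 1) + (d - j - 1)`. But a `Θ_i` meeting both arcs is, for every `t`, linked with `{t, ρ}`
or with `{t, ρ + j/d}`.
-/

def icoLift (r : ℝ) (w : 𝕊) : ℝ := AddCircle.equivIco 1 r w

lemma icoLift_mem (r : ℝ) (w : 𝕊) : icoLift r w ∈ Ico r (r + 1) :=
  (AddCircle.equivIco 1 r w).2

@[simp]
lemma coe_icoLift (r : ℝ) (w : 𝕊) : ((icoLift r w : ℝ) : 𝕊) = w :=
  AddCircle.coe_equivIco

lemma icoLift_coe {r x : ℝ} (hx : x ∈ Ico r (r + 1)) : icoLift r x = x :=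
  AddCircle.equivIco_coe_of_mem hx

lemma icoLift_injective (r : ℝ) : Function.Injective (icoLift r) :=
  Function.LeftInverse.injective (coe_icoLift r)

lemma icoLift_mem_Ioo_or_mem_Ioo {ρ δ : ℝ} {w : 𝕊} (hρ : w ≠ ρ) (hδ : w ≠ ((ρ + δ : ℝ) : 𝕊)) :
    icoLift ρ w ∈ Ioo ρ (ρ + δ) ∨ icoLift ρ w ∈ Ioo (ρ + δ) (ρ + 1) := by
  have hne : ∀ x : ℝ, w ≠ x → icoLift ρ w ≠ x := fun x hx h => hx (by rw [← h, coe_icoLift])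
  rcases lt_or_gt_of_ne (hne _ hδ) with h | h
  · exact .inl ⟨(icoLift_mem ρ w).1.lt_of_ne (hne _ hρ).symm, h⟩
  · exact .inr ⟨h, (icoLift_mem ρ w).2⟩

lemma continuousOn_icoLift (r : ℝ) : ContinuousOn (icoLift r) {(r : 𝕊)}ᶜ := fun _ hw =>
  (continuous_subtype_val.continuousAt.comp
    (AddCircle.continuousAt_equivIco 1 r hw)).continuousWithinAt

lemma Unlinked.mono_right {A B B' : Set 𝕊} (h : Unlinked A B) (hB : B' ⊆ B) : Unlinked A B' :=
  let ⟨x, hx⟩ := h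
  ⟨x, hx.trans (connectedComponentIn_mono x (compl_subset_compl.2 hB))⟩

lemma Unlinked.disjoint {A B : Set 𝕊} (h : Unlinked A B) : Disjoint A B :=
  let ⟨x, hx⟩ := h
  subset_compl_iff_disjoint_right.1 (hx.trans (connectedComponentIn_subset _ x))

lemma Unlinked.coe_notMem {A : Set 𝕊} {β₁ β₂ α α' : ℝ}
    (hA : Unlinked A {(β₁ : 𝕊), (β₂ : 𝕊)}) (hα : α ∈ Ioo β₁ β₂) (hα' : α' ∈ Ioo β₂ (β₁ + 1))
    (ha : (α : 𝕊) ∈ A) : (α' : 𝕊) ∉ A := by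
  intro ha'
  obtain ⟨x, hx⟩ := hA
  obtain ⟨hβα, hαβ⟩ := hα
  obtain ⟨hβα', hα'β⟩ := hα'
  have hS := connectedComponentIn_subset ({(β₁ : 𝕊), (β₂ : 𝕊)} : Set 𝕊)ᶜ x
  have hcont : ContinuousOn (icoLift β₁) (connectedComponentIn {(β₁ : 𝕊), (β₂ : 𝕊)}ᶜ x) :=
    (continuousOn_icoLift β₁).mono fun w hw hβ => hS hw (Or.inl hβ)
  have hlift : ∀ y ∈ Ioo β₁ (β₁ + 1), icoLift β₁ y = y := fun y hy =>
    icoLift_coe ⟨hy.1.le, hy.2⟩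
  obtain ⟨w, hw, hwβ⟩ := (isPreconnected_connectedComponentIn.image _ hcont).Icc_subset
    (mem_image_of_mem _ (hx ha)) (mem_image_of_mem _ (hx ha'))
    (show β₂ ∈ Icc (icoLift β₁ α) (icoLift β₁ α') by
      rw [hlift α ⟨hβα, by linarith⟩, hlift α' ⟨by linarith, hα'β⟩]
      exact ⟨hαβ.le, hβα'.le⟩)
  exact hS hw (Or.inr (by rw [← hwβ, coe_icoLift]; rfl))

def Noncrossing (X Y : Set ℝ) : Prop :=
  ∀ y₁ ∈ Y, ∀ y₂ ∈ Y, ∀ x ∈ X, y₁ < x → x < y₂ → X ⊆ Icc y₁ y₂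

lemma Noncrossing.mono {X X' Y Y' : Set ℝ} (h : Noncrossing X Y) (hX : X' ⊆ X) (hY : Y' ⊆ Y) :
    Noncrossing X' Y' := fun y₁ hy₁ y₂ hy₂ x hx h₁ h₂ =>
  hX.trans (h y₁ (hY hy₁) y₂ (hY hy₂) x (hX hx) h₁ h₂)

structure IsNoncrossingLattice {ι : Type*} (d : ℕ) (s : Finset ι) (A : ι → Set ℝ) : Prop where
  finite : ∀ i ∈ s, (A i).Finite
  lattice : ∀ i ∈ s, ∀ a ∈ A i, ∀ b ∈ A i, ∃ m : ℤ, (a - b) * d = m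
  disjoint : (s : Set ι).PairwiseDisjoint A
  noncrossing : (s : Set ι).Pairwise fun i j => Noncrossing (A i) (A j)

lemma natCast_add_add_one_lt {k l : ℕ} {m : ℤ} {x : ℝ} (hk : (k : ℝ) < m) (hl : (l : ℝ) < x - m) :
    ((k + l + 1 : ℕ) : ℝ) < x := by
  have hkm : (k : ℤ) + 1 ≤ m := by exact_mod_cast hk
  have : (k : ℝ) + 1 ≤ m := by exact_mod_cast hkm
  push_cast
  linarith

namespace IsNoncrossingLattice

variable {ι : Type*} {d : ℕ} {s : Finset ι} {A : ι → Set ℝ}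

lemma mono (h : IsNoncrossingLattice d s A) {s' : Finset ι} {A' : ι → Set ℝ} (hs : s' ⊆ s)
    (hA : ∀ i ∈ s', A' i ⊆ A i) : IsNoncrossingLattice d s' A' where
  finite i hi := (h.finite i (hs hi)).subset (hA i hi)
  lattice i hi a ha b hb := h.lattice i (hs hi) a (hA i hi ha) b (hA i hi hb)
  disjoint i hi j hj hij := (h.disjoint (hs hi) (hs hj) hij).mono (hA i hi) (hA j hj)
  noncrossing i hi j hj hij := (h.noncrossing (hs hi) (hs hj) hij).mono (hA i hi) (hA j hj)

lemma ne_of_mem (h : IsNoncrossingLattice d s A) {i j : ι} (hi : i ∈ s) (hj : j ∈ s) (hij : i ≠ j)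
    {a b : ℝ} (ha : a ∈ A i) (hb : b ∈ A j) : a ≠ b := by
  rintro rfl
  exact Set.disjoint_left.1 (h.disjoint hi hj hij) ha hb

lemma exists_isLeast (h : IsNoncrossingLattice d s A) (hne : ∃ i ∈ s, (A i).Nonempty) :
    ∃ i₀ ∈ s, ∃ a₀ ∈ A i₀, ∀ i ∈ s, ∀ a ∈ A i, a₀ ≤ a := by
  have hfin : (⋃ i ∈ s, A i).Finite := s.finite_toSet.biUnion h.finite
  obtain ⟨i, hi, a, ha⟩ := hne
  obtain ⟨a₀, ha₀, hmin⟩ := Set.exists_min_image _ id hfin ⟨a, mem_biUnion hi ha⟩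
  obtain ⟨i₀, hi₀, ha₀⟩ := mem_iUnion₂.1 ha₀
  exact ⟨i₀, hi₀, a₀, ha₀, fun i hi a ha => hmin a (mem_biUnion hi ha)⟩

/-- With `a₀` the least point of the family, a member other than `A i₀` reaching below a point
`c` of `A i₀` cannot reach beyond `c`, since it would then enclose `c` without enclosing `a₀`. -/
lemma subset_Ioo_of_exists_lt (h : IsNoncrossingLattice d s A) {i₀ i : ι} (hi₀ : i₀ ∈ s)
    (hi : i ∈ s) (hne : i ≠ i₀) {a₀ c : ℝ} (ha₀ : a₀ ∈ A i₀) (hc : c ∈ A i₀)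
    (hmin : ∀ i ∈ s, ∀ a ∈ A i, a₀ ≤ a) (hb : ∃ b ∈ A i, b < c) : A i ⊆ Ioo a₀ c := by
  obtain ⟨b, hb, hbc⟩ := hb
  intro b' hb'
  refine ⟨(hmin i hi b' hb').lt_of_ne (h.ne_of_mem hi₀ hi hne.symm ha₀ hb'), ?_⟩
  by_contra! hcb'
  have hcb' := hcb'.lt_of_ne (h.ne_of_mem hi₀ hi hne.symm hc hb')
  have := (h.noncrossing hi₀ hi hne.symm b hb b' hb' c hc hbc hcb' ha₀).1
  exact h.ne_of_mem hi₀ hi hne.symm ha₀ hb ((hmin i hi b hb).antisymm this)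

lemma sdiff_singleton_eq_self_of_ne (h : IsNoncrossingLattice d s A) {i₀ i : ι} (hi₀ : i₀ ∈ s)
    (hi : i ∈ s) (hne : i ≠ i₀) {a₀ : ℝ} (ha₀ : a₀ ∈ A i₀) : A i \ {a₀} = A i :=
  sdiff_singleton_eq_self fun ha => h.ne_of_mem hi₀ hi hne.symm ha₀ ha rfl

lemma sum_ncard_sub_one_eq_sdiff_add (h : IsNoncrossingLattice d s A) {i₀ : ι} (hi₀ : i₀ ∈ s)
    {a₀ : ℝ} (ha₀ : a₀ ∈ A i₀) :
    ∑ i ∈ s, ((A i).ncard - 1) = ∑ i ∈ s, ((A i \ {a₀}).ncard - 1) + min (A i₀ \ {a₀}).ncard 1 := by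
  classical
  have herase : ∑ i ∈ s.erase i₀, ((A i \ {a₀}).ncard - 1) = ∑ i ∈ s.erase i₀, ((A i).ncard - 1) :=
    Finset.sum_congr rfl fun i hi => by
      rw [h.sdiff_singleton_eq_self_of_ne hi₀ (Finset.mem_of_mem_erase hi)
        (Finset.ne_of_mem_erase hi) ha₀]
  rw [← Finset.add_sum_erase s _ hi₀, ← Finset.add_sum_erase s _ hi₀, herase,
    ncard_sdiff_singleton_of_mem ha₀]
  omega

/-- The inductive step removes the least point `a₀`, lying in `A i₀`. If `A i₀` has a next point
`c`, the members reaching below `c` lie in `(a₀, c)`, of length `m / d` with `m ∈ ℤ`, so their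
excess is at most `m - 1`; the rest lies in `[c, v)`, within an interval of length
`(v - u) - m / d`. -/
lemma sum_ncard_sub_one_lt_of_isLeast (h : IsNoncrossingLattice d s A) {u v : ℝ}
    (hA : ∀ i ∈ s, A i ⊆ Ioo u v) {i₀ : ι} (hi₀ : i₀ ∈ s) {a₀ : ℝ} (ha₀ : a₀ ∈ A i₀)
    (hmin : ∀ i ∈ s, ∀ a ∈ A i, a₀ ≤ a)
    (ih : ∀ t ⊆ s, ∀ {u v : ℝ}, u < v → (∀ i ∈ t, A i \ {a₀} ⊆ Ioo u v) →
      ((∑ i ∈ t, ((A i \ {a₀}).ncard - 1) : ℕ) : ℝ) < d * (v - u)) :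
    ((∑ i ∈ s, ((A i).ncard - 1) : ℕ) : ℝ) < d * (v - u) := by
  classical
  have hua₀ : u < a₀ := (hA i₀ hi₀ ha₀).1
  have hA' : ∀ i ∈ s, A i \ {a₀} ⊆ Ioo a₀ v := fun i hi a ha =>
    ⟨(hmin i hi a ha.1).lt_of_ne (Ne.symm ha.2), (hA i hi ha.1).2⟩
  rw [h.sum_ncard_sub_one_eq_sdiff_add hi₀ ha₀]
  rcases (A i₀ \ {a₀}).eq_empty_or_nonempty with hempty | hne
  · rw [hempty, ncard_empty, min_eq_left zero_le_one, add_zero]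
    exact (ih s subset_rfl (hA i₀ hi₀ ha₀).2 hA').trans_le
      (mul_le_mul_of_nonneg_left (by linarith) d.cast_nonneg)
  obtain ⟨c, hc, hcmin⟩ := exists_min_image _ id ((h.finite i₀ hi₀).subset sdiff_subset) hne
  obtain ⟨m, hm⟩ := h.lattice i₀ hi₀ c hc.1 a₀ ha₀
  have hinner : ∀ i ∈ s.filter (fun i => ∃ b ∈ A i \ {a₀}, b < c), A i \ {a₀} ⊆ Ioo a₀ c := by
    intro i hi
    obtain ⟨his, b, hb, hbc⟩ := Finset.mem_filter.1 hi
    have hne : i ≠ i₀ := by rintro rfl; exact (hcmin b hb).not_gt hbc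
    rw [h.sdiff_singleton_eq_self_of_ne hi₀ his hne ha₀] at hb ⊢
    exact h.subset_Ioo_of_exists_lt hi₀ his hne ha₀ hc.1 hmin ⟨b, hb, hbc⟩
  have hrest : ∀ i ∈ s.filter (fun i => ¬ ∃ b ∈ A i \ {a₀}, b < c),
      A i \ {a₀} ⊆ Ioo (c - (a₀ - u)) v := by
    intro i hi a ha
    obtain ⟨his, hnot⟩ := Finset.mem_filter.1 hi
    exact ⟨by linarith [not_lt.1 fun hac => hnot ⟨a, ha, hac⟩], (hA' i his ha).2⟩
  rw [min_eq_right ((ncard_pos ((h.finite i₀ hi₀).subset sdiff_subset)).2 hne),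
    ← Finset.sum_filter_add_sum_filter_not s (fun i => ∃ b ∈ A i \ {a₀}, b < c)]
  refine natCast_add_add_one_lt (m := m) ?_ ?_
  · exact (ih _ (Finset.filter_subset _ _) (hA' i₀ hi₀ hc).1 hinner).trans_eq
      (by rw [mul_comm, hm])
  · exact (ih _ (Finset.filter_subset _ _) (by linarith [(hA' i₀ hi₀ hc).2]) hrest).trans_eq
      (by rw [← hm]; ring)

theorem sum_ncard_sub_one_lt (h : IsNoncrossingLattice d s A) (hd : 0 < d) {u v : ℝ}
    (huv : u < v) (hA : ∀ i ∈ s, A i ⊆ Ioo u v) :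
    ((∑ i ∈ s, ((A i).ncard - 1) : ℕ) : ℝ) < d * (v - u) := by
  induction hn : ∑ i ∈ s, (A i).ncard using Nat.strong_induction_on generalizing s A u v with
  | _ n ih =>
  subst hn
  by_cases hne : ∃ i ∈ s, (A i).Nonempty
  swap
  · rw [Finset.sum_eq_zero fun i hi =>
      by simp [not_nonempty_iff_eq_empty.1 fun h => hne ⟨i, hi, h⟩]]
    push_cast
    exact mul_pos (Nat.cast_pos.2 hd) (sub_pos.2 huv)
  obtain ⟨i₀, hi₀, a₀, ha₀, hmin⟩ := h.exists_isLeast hne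
  refine h.sum_ncard_sub_one_lt_of_isLeast hA hi₀ ha₀ hmin fun t ht u v huv hA' =>
    ih _ ?_ (h.mono ht fun i _ => sdiff_subset) huv hA' rfl
  refine (Finset.sum_le_sum_of_subset ht).trans_lt (Finset.sum_lt_sum
    (fun i hi => ncard_le_ncard sdiff_subset (h.finite i hi)) ⟨i₀, hi₀, ?_⟩)
  exact ncard_lt_ncard (sdiff_singleton_ssubset.2 ha₀) (h.finite i₀ hi₀)

theorem sum_ncard_sub_one_add_two_le (h : IsNoncrossingLattice d s A) (hd : 0 < d) {u w v : ℝ}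
    (huw : u < w) (hwv : w < v) {k l : ℕ} (hk : d * (w - u) = k) (hl : d * (v - w) = l)
    (hA : ∀ i ∈ s, A i ⊆ Ioo u w ∨ A i ⊆ Ioo w v) :
    ∑ i ∈ s, ((A i).ncard - 1) + 2 ≤ k + l := by
  classical
  have h₁ := (h.mono (Finset.filter_subset (fun i => A i ⊆ Ioo u w) s) fun _ _ => subset_rfl)
    |>.sum_ncard_sub_one_lt hd huw fun i hi => (Finset.mem_filter.1 hi).2
  have h₂ := (h.mono (Finset.filter_subset (fun i => ¬ A i ⊆ Ioo u w) s) fun _ _ => subset_rfl)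
    |>.sum_ncard_sub_one_lt hd hwv fun i hi =>
      (hA i (Finset.mem_filter.1 hi).1).resolve_left (Finset.mem_filter.1 hi).2
  rw [hk] at h₁
  rw [hl] at h₂
  rw [← Finset.sum_filter_add_sum_filter_not s (fun i => A i ⊆ Ioo u w)]
  have := Nat.cast_lt.1 h₁
  have := Nat.cast_lt.1 h₂
  omega

end IsNoncrossingLattice

lemma exists_int_of_nsmul_coe_eq {d : ℕ} {x y : ℝ} (h : d • (x : 𝕊) = d • (y : 𝕊)) :
    ∃ m : ℤ, (x - y) * d = m := by
  have h0 : ((d * x - d * y : ℝ) : 𝕊) = 0 := by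
    rw [AddCircle.coe_sub, ← nsmul_eq_mul, ← nsmul_eq_mul, AddCircle.coe_nsmul,
      AddCircle.coe_nsmul, h, sub_self]
  obtain ⟨m, hm⟩ := (AddCircle.coe_eq_zero_iff (1 : ℝ)).1 h0
  exact ⟨m, by rw [zsmul_eq_mul, mul_one] at hm; rw [hm]; ring⟩

namespace CriticalPortrait

variable {d : ℕ} (P : CriticalPortrait d)

lemma two_le_of_mem_union {θ : 𝕊} (hθ : θ ∈ P.union) : 2 ≤ d := by
  obtain ⟨A, hA, -⟩ := mem_sUnion.1 hθ
  have := Finset.single_le_sum (f := fun A => A.ncard - 1) (fun _ _ => Nat.zero_le _) hA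
  have := P.two_le A hA
  have := P.sum_card
  omega

lemma isNoncrossingLattice_icoLift (r : ℝ) :
    IsNoncrossingLattice d P.sets fun A => icoLift r '' A where
  finite A hA := (P.finite A hA).image _
  lattice A hA := by
    obtain ⟨w, hw⟩ := ncard_eq_one.1 (P.image_ncard A hA)
    have hmd : ∀ a ∈ A, d • a = w := fun a ha =>
      (hw.subset (mem_image_of_mem (md d) ha) : md d a ∈ ({w} : Set 𝕊))
    rintro _ ⟨a, ha, rfl⟩ _ ⟨b, hb, rfl⟩
    exact exists_int_of_nsmul_coe_eq (by rw [coe_icoLift, coe_icoLift, hmd a ha, hmd b hb])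
  disjoint A hA B hB hAB :=
    (disjoint_image_iff (icoLift_injective r)).2 (P.pairwise_unlinked A hA B hB hAB).disjoint
  noncrossing A hA B hB hAB := by
    rintro _ ⟨b₁, hb₁, rfl⟩ _ ⟨b₂, hb₂, rfl⟩ _ ⟨a, ha, rfl⟩ h₁ h₂ _ ⟨a', ha', rfl⟩
    have hU : Unlinked A {((icoLift r b₁ : ℝ) : 𝕊), ((icoLift r b₂ : ℝ) : 𝕊)} :=
      (P.pairwise_unlinked A hA B hB hAB).mono_right (by simp [insert_subset_iff, hb₁, hb₂])
    have hb₁r := icoLift_mem r b₁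
    have hb₂r := icoLift_mem r b₂
    have ha'r := icoLift_mem r a'
    have ha₁ : ((icoLift r a : ℝ) : 𝕊) ∈ A := by rwa [coe_icoLift]
    by_contra hout
    rcases not_and_or.1 hout with hlt | hgt
    · refine hU.coe_notMem ⟨h₁, h₂⟩ (α' := icoLift r a' + 1) ⟨?_, ?_⟩ ha₁ ?_
      · linarith [hb₂r.2, ha'r.1]
      · linarith [not_le.1 hlt]
      · rwa [AddCircle.coe_add_period, coe_icoLift]
    · exact hU.coe_notMem ⟨h₁, h₂⟩ ⟨not_le.1 hgt, by linarith [ha'r.2, hb₁r.1]⟩ ha₁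
        (by rwa [coe_icoLift])

theorem exists_mem_Ioo_of_notMem_union {ρ : ℝ} {j : ℕ} (hj : 0 < j) (hjd : j < d)
    (hρ : (ρ : 𝕊) ∉ P.union) (hρ' : ((ρ + j / d : ℝ) : 𝕊) ∉ P.union) :
    ∃ A ∈ P.sets, ∃ α ∈ Ioo ρ (ρ + j / d), ∃ α' ∈ Ioo (ρ + j / d) (ρ + 1),
      (α : 𝕊) ∈ A ∧ (α' : 𝕊) ∈ A := by
  by_contra! hcon
  have hd : (0 : ℝ) < d := by exact_mod_cast hj.trans hjd
  have hsplit : ∀ A ∈ P.sets,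
      icoLift ρ '' A ⊆ Ioo ρ (ρ + j / d) ∨ icoLift ρ '' A ⊆ Ioo (ρ + j / d) (ρ + 1) := by
    intro A hA
    have hlift : ∀ a ∈ A,
        icoLift ρ a ∈ Ioo ρ (ρ + j / d) ∨ icoLift ρ a ∈ Ioo (ρ + j / d) (ρ + 1) := fun a ha =>
      icoLift_mem_Ioo_or_mem_Ioo (ne_of_mem_of_not_mem (mem_sUnion_of_mem ha hA) hρ)
        (ne_of_mem_of_not_mem (mem_sUnion_of_mem ha hA) hρ')
    by_contra! hboth
    obtain ⟨_, ⟨a, ha, rfl⟩, ha₁⟩ := not_subset.1 hboth.1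
    obtain ⟨_, ⟨a', ha', rfl⟩, ha₂⟩ := not_subset.1 hboth.2
    exact hcon A hA _ ((hlift a' ha').resolve_right ha₂) _ ((hlift a ha).resolve_left ha₁)
      (by rwa [coe_icoLift]) (by rwa [coe_icoLift])
  have hδ : (0 : ℝ) < j / d := div_pos (by exact_mod_cast hj) hd
  have hδ1 : (j : ℝ) / d < 1 := (div_lt_one hd).2 (by exact_mod_cast hjd)
  have := (P.isNoncrossingLattice_icoLift ρ).sum_ncard_sub_one_add_two_le (hj.trans hjd)
    (by linarith) (by linarith) (k := j) (l := d - j) (by field_simp; ring)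
    (by rw [Nat.cast_sub hjd.le]; field_simp; ring) hsplit
  have hsum := P.sum_card
  simp only [← ncard_image_of_injective _ (icoLift_injective ρ)] at hsum
  omega

end CriticalPortrait

/-- Depending on where `t` lies relative to `α` and `α'`, one of the pairs `{t, ρ}`,
`{t, ρ + δ}` separates `α` from `α'`. -/
lemma Unlinked.not_unlinked_of_mem_Ioo {A : Set 𝕊} {t : 𝕊} (ht : t ∉ A) {ρ δ α α' : ℝ}
    (hα : α ∈ Ioo ρ (ρ + δ)) (hα' : α' ∈ Ioo (ρ + δ) (ρ + 1)) (ha : (α : 𝕊) ∈ A)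
    (ha' : (α' : 𝕊) ∈ A) (h : Unlinked A {t, (ρ : 𝕊)}) : ¬ Unlinked A {t, ((ρ + δ : ℝ) : 𝕊)} := by
  intro h'
  obtain ⟨hρτ, hτρ⟩ := icoLift_mem ρ t
  rw [← coe_icoLift ρ t] at h h' ht
  set τ := icoLift ρ t
  obtain ⟨hρα, hαδ⟩ := hα
  obtain ⟨hδα', hα'ρ⟩ := hα'
  rcases lt_trichotomy τ α with hτα | rfl | hατ
  · exact h'.coe_notMem ⟨hτα, hαδ⟩ ⟨hδα', by linarith⟩ ha ha'
  · exact ht ha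
  rcases lt_trichotomy τ α' with hτα' | rfl | hα'τ
  · rw [pair_comm] at h
    exact h.coe_notMem ⟨hρα, hατ⟩ ⟨hτα', hα'ρ⟩ ha ha'
  · exact ht ha'
  · rw [pair_comm] at h'
    exact h'.coe_notMem ⟨hδα', hα'τ⟩ (α' := α + 1) ⟨by linarith, by linarith⟩ ha'
      (by rwa [AddCircle.coe_add_period])

lemma Function.exists_iterate_ne_and_apply_iterate_eq {α : Type*} (f : α → α) {x y : α}
    (hxy : x ≠ y) {n : ℕ} (h : f^[n] x = f^[n] y) :
    ∃ m, f^[m] x ≠ f^[m] y ∧ f (f^[m] x) = f (f^[m] y) := by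
  induction n with
  | zero => exact absurd h hxy
  | succ n ih =>
    by_cases hn : f^[n] x = f^[n] y
    · exact ih hn
    · exact ⟨n, hn, by simpa only [Function.iterate_succ_apply'] using h⟩

lemma exists_coe_add_div_of_md_eq {d : ℕ} (hd : 0 < d) {X Y : 𝕊} (hXY : X ≠ Y)
    (h : md d X = md d Y) : ∃ x : ℝ, ∃ j : ℕ, 0 < j ∧ j < d ∧ (x : 𝕊) = X ∧
      ((x + j / d : ℝ) : 𝕊) = Y := by
  obtain ⟨j, hjd, hj⟩ := (AddCircle.nsmul_eq_zero_iff hd).1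
    (show d • (Y - X) = 0 by rw [smul_sub, ← md, ← md, h, sub_self])
  refine ⟨icoLift 0 X, j, Nat.pos_of_ne_zero ?_, hjd, coe_icoLift 0 X, ?_⟩
  · rintro rfl
    exact hXY (sub_eq_zero.1 (by simpa using hj.symm)).symm
  · rw [AddCircle.coe_add, coe_icoLift, ← mul_one ((j : ℝ) / d), hj, add_sub_cancel]

lemma HasItin.exists_coe_mem_and_coe_add_mem {d : ℕ} {P : CriticalPortrait d} {θ : 𝕊}
    {L : ℕ → Set 𝕊} (h : HasItin d P θ L) {n n' : ℕ} (hL : L n' = L n) {x δ : ℝ}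
    (hx : (x : 𝕊) = (md d)^[n] θ) (hx' : ((x + δ : ℝ) : 𝕊) = (md d)^[n'] θ) :
    ∃ ρ : ℝ, (ρ : 𝕊) ∈ L n ∧ ((ρ + δ : ℝ) : 𝕊) ∈ L n := by
  rw [← hL]
  rcases h with h | h
  · obtain ⟨ε, hε, hseg⟩ := (h n).2
    obtain ⟨ε', hε', hseg'⟩ := (h n').2
    refine ⟨x + min ε ε' / 2, hL ▸ hseg ⟨x, hx, _, ⟨?_, ?_⟩, rfl⟩,
      hseg' ⟨x + δ, hx', _, ⟨?_, ?_⟩, by rw [add_right_comm]⟩⟩ <;>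
    linarith [min_le_left ε ε', min_le_right ε ε', lt_min hε hε']
  · obtain ⟨ε, hε, hseg⟩ := (h n).2
    obtain ⟨ε', hε', hseg'⟩ := (h n').2
    refine ⟨x - min ε ε' / 2, hL ▸ hseg ⟨x, hx, _, ⟨?_, ?_⟩, rfl⟩,
      hseg' ⟨x + δ, hx', _, ⟨?_, ?_⟩, by rw [sub_add_eq_add_sub]⟩⟩ <;>
    linarith [min_le_left ε ε', min_le_right ε ε', lt_min hε hε']

lemma HasItin.isUnlinkedClass {d : ℕ} {P : CriticalPortrait d} {θ : 𝕊} {L : ℕ → Set 𝕊}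
    (h : HasItin d P θ L) (n : ℕ) : P.IsUnlinkedClass (L n) :=
  h.elim (fun h => (h n).1) (fun h => (h n).1)

theorem aperiodic_kneading_of_preperiodic_general (d : ℕ) (P : CriticalPortrait d)
    (hpre : ∀ θ ∈ P.union, IsRatC θ ∧
      (∀ q : ℕ, 0 < q → (md d)^[q] θ ≠ θ) ∧
      (∃ k q : ℕ, 0 < k ∧ 0 < q ∧ (md d)^[k + q] θ = (md d)^[k] θ)) :
    ∀ θ ∈ P.union, ∀ L : ℕ → Set 𝕊, HasItin d P θ L →
      ¬ ∃ q : ℕ, 0 < q ∧ ∀ n, L (n + q) = L n := by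
  rintro θ hθ L hL ⟨q, hq, hLq⟩
  obtain ⟨-, hnp, k, p, -, hp, hkp⟩ := hpre θ hθ
  have hd : 0 < d := by have := P.two_le_of_mem_union hθ; omega
  -- `N = p * q` is a period both of the itinerary and of the orbit from time `k` on.
  set N := p * q
  have hLN : ∀ n, L (n + N) = L n := by
    simpa [N, mul_comm] using (show Function.Periodic L q from hLq).nat_mul p
  have horbit : (md d)^[k] ((md d)^[N] θ) = (md d)^[k] θ := by
    have : Function.IsPeriodicPt (md d) p ((md d)^[k] θ) := by
      rw [Function.IsPeriodicPt, Function.IsFixedPt, ← Function.iterate_add_apply, add_comm, hkp]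
    rw [← Function.iterate_add_apply, add_comm, Function.iterate_add_apply]
    exact this.mul_const q
  obtain ⟨n, hne, heq⟩ := Function.exists_iterate_ne_and_apply_iterate_eq (md d)
    (hnp N (Nat.mul_pos hp hq)).symm horbit.symm
  rw [← Function.iterate_add_apply] at hne heq
  obtain ⟨x, j, hj, hjd, hx, hx'⟩ := exists_coe_add_div_of_md_eq hd hne heq
  obtain ⟨ρ, hρ, hρ'⟩ := hL.exists_coe_mem_and_coe_add_mem (hLN n) hx hx'
  obtain ⟨t, ht, hLt⟩ := hL.isUnlinkedClass n
  rw [hLt] at hρ hρ'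
  obtain ⟨A, hA, α, hα, α', hα', ha, ha'⟩ :=
    P.exists_mem_Ioo_of_notMem_union hj hjd hρ.2.1 hρ'.2.1
  exact ((hρ.2.2 A hA).2.not_unlinked_of_mem_Ioo (fun htA => ht (mem_sUnion_of_mem htA hA))
    hα hα' ha ha') (hρ'.2.2 A hA).2

/-- If every argument of a critical portrait `Θ` is rational and strictly pre-periodic
under `m_d`, then `Θ` has aperiodic kneading: no participating argument has a periodic
one-sided itinerary. -/
theorem aperiodic_kneading_of_preperiodic (d : ℕ) (hd : 2 ≤ d) (P : CriticalPortrait d)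
    (hpre : ∀ θ ∈ P.union, IsRatC θ ∧
      (∀ q : ℕ, 0 < q → (md d)^[q] θ ≠ θ) ∧
      (∃ k q : ℕ, 0 < k ∧ 0 < q ∧ (md d)^[k + q] θ = (md d)^[k] θ)) :
    ∀ θ ∈ P.union, ∀ L : ℕ → Set 𝕊, HasItin d P θ L →
      ¬ ∃ q : ℕ, 0 < q ∧ ∀ n, L (n + q) = L n :=
  aperiodic_kneading_of_preperiodic_general d P hpre
end
end
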